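/- arXiv:1708.03890 — 7 statements merged into one kernel-verified Lean document; each statement's English description precedes it below -/
import Mathlib

section
/- For any simple graph G, the bivariate domination polynomial J(G;x,y) := Σ_{W ⊆ V(G)} x^{|W|} y^{|N(W)|} evaluated at x = -1/(1+t), y = 1/(1+t) and multiplied by (1+t)^{|V(G)|} equals the domination polynomial D(G,t) := Σ_{W ⊆ V(G), N[W]=V(G)} t^{|W|}. -/
open Finset
open scoped Classical

/-- External neighbourhood N(W) = N[W] \ W of a vertex subset. -/
noncomputable def extN {V : Type} [Fintype V] (G : SimpleGraph V) (W : Finset V) : Finset V :=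
  Finset.univ.filter (fun v => v ∉ W ∧ ∃ w ∈ W, G.Adj v w)

/-- The bivariate domination polynomial J(G;x,y) = ∑_{W ⊆ V} x^|W| y^|N(W)|. -/
noncomputable def JP {V : Type} [Fintype V] (G : SimpleGraph V) (x y : ℝ) : ℝ :=
  ∑ W : Finset V, x ^ W.card * y ^ (extN G W).card

/-- Vertex deletion G − a. -/
noncomputable def Gdel {V : Type} (G : SimpleGraph V) (a : V) : SimpleGraph {v : V // v ≠ a} :=
  G.induce {v : V | v ≠ a}

/-- Deletion of a set of vertices. -/
noncomputable def GdelSet {V : Type} (G : SimpleGraph V) (S : Set V) : SimpleGraph {v : V // v ∉ S} :=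
  G.induce {v : V | v ∉ S}

/-- Vertex contraction G∖a: join all neighbours of a, then delete a. -/
noncomputable def Gcon {V : Type} (G : SimpleGraph V) (a : V) : SimpleGraph {v : V // v ≠ a} where
  Adj u v := u ≠ v ∧ (G.Adj u.val v.val ∨ (G.Adj u.val a ∧ G.Adj a v.val))
  symm := ⟨fun _ _ ⟨h1, h2⟩ =>
    ⟨fun e => h1 e.symm, h2.imp G.adj_symm (fun ⟨p, q⟩ => ⟨G.adj_symm q, G.adj_symm p⟩)⟩⟩
  loopless := ⟨fun _ h => h.1 rfl⟩

/-- The domination polynomial D(G,t) = ∑_{W dominating} t^|W|. -/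
noncomputable def DP {V : Type} [Fintype V] (G : SimpleGraph V) (t : ℝ) : ℝ :=
  ∑ W ∈ Finset.univ.filter
      (fun W : Finset V => ∀ v : V, v ∈ W ∨ ∃ w ∈ W, G.Adj v w), t ^ W.card

/-!
Substituting `x = -1/(1+t)`, `y = 1/(1+t)` turns the summand of `W` into
`(-1)^|W| (1+t)^|V \ N[W]| = (-1)^|W| ∑_{S ⊆ V \ N[W]} t^|S|`. The condition `S ∩ N[W] = ∅` says
that no vertex of `S` equals or is adjacent to a vertex of `W`, which is symmetric in `S` and `W`;
exchanging the sums leaves `∑_S t^|S| ∑_{W ⊆ V \ N[S]} (-1)^|W|`, and the alternating inner sum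
vanishes unless `N[S] = V`.
-/

theorem one_add_pow_card_eq_sum_powerset {ι R : Type*} [CommSemiring R] (s : Finset ι) (t : R) :
    (1 + t) ^ s.card = ∑ u ∈ s.powerset, t ^ u.card := by
  simp [← sum_pow_mul_eq_add_pow t 1 s, add_comm]

theorem sum_powerset_neg_one_pow_card_of_ring {α R : Type*} [DecidableEq α] [Ring R]
    (s : Finset α) : ∑ u ∈ s.powerset, (-1 : R) ^ u.card = if s = ∅ then 1 else 0 := by
  exact_mod_cast congrArg (Int.cast : ℤ → R) (sum_powerset_neg_one_pow_card (x := s))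

section ClosedNeighbourhood

variable {V : Type} [Fintype V] (G : SimpleGraph V)

noncomputable def closedNbhd (W : Finset V) : Finset V := W ∪ extN G W

theorem disjoint_extN (W : Finset V) : Disjoint W (extN G W) := by
  simp only [disjoint_left, extN, mem_filter]
  tauto

theorem card_closedNbhd (W : Finset V) :
    (closedNbhd G W).card = W.card + (extN G W).card :=
  card_union_of_disjoint (disjoint_extN G W)

theorem notMem_closedNbhd_iff {W : Finset V} {v : V} :
    v ∉ closedNbhd G W ↔ ∀ w ∈ W, v ≠ w ∧ ¬ G.Adj v w := by
  simp only [closedNbhd, extN, mem_union, mem_filter, mem_univ, true_and]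
  constructor
  · rintro h w hw
    exact ⟨by rintro rfl; exact h (Or.inl hw), fun hvw => h (Or.inr ⟨by tauto, w, hw, hvw⟩)⟩
  · rintro h (hv | ⟨-, w, hw, hvw⟩)
    · exact (h v hv).1 rfl
    · exact (h w hw).2 hvw

theorem subset_compl_closedNbhd_comm (S W : Finset V) :
    S ⊆ (closedNbhd G W)ᶜ ↔ W ⊆ (closedNbhd G S)ᶜ := by
  simp only [subset_iff, mem_compl, notMem_closedNbhd_iff]
  exact ⟨fun h w hw v hv => ⟨fun e => (h hv w hw).1 e.symm, fun a => (h hv w hw).2 a.symm⟩,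
    fun h v hv w hw => ⟨fun e => (h hw v hv).1 e.symm, fun a => (h hw v hv).2 a.symm⟩⟩

theorem closedNbhd_eq_univ_iff (S : Finset V) :
    closedNbhd G S = univ ↔ ∀ v : V, v ∈ S ∨ ∃ w ∈ S, G.Adj v w := by
  simp only [eq_univ_iff_forall, closedNbhd, extN, mem_union, mem_filter, mem_univ, true_and]
  exact forall_congr' fun v => by tauto

theorem one_add_pow_card_mul_JP_summand (t : ℝ) (ht : 1 + t ≠ 0) (W : Finset V) :
    (1 + t) ^ Fintype.card V * ((-1 / (1 + t)) ^ W.card * (1 / (1 + t)) ^ (extN G W).card) =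
      (-1) ^ W.card * (1 + t) ^ (closedNbhd G W)ᶜ.card := by
  have hsplit : (1 + t) ^ Fintype.card V =
      (1 + t) ^ (closedNbhd G W)ᶜ.card * (1 + t) ^ W.card * (1 + t) ^ (extN G W).card := by
    rw [← pow_add, ← pow_add, add_assoc, ← card_closedNbhd, card_compl_add_card]
  rw [hsplit, div_pow, div_pow, one_pow]
  field_simp

theorem sum_neg_one_pow_mul_one_add_pow_card_compl_closedNbhd (t : ℝ) :
    ∑ W : Finset V, (-1) ^ W.card * (1 + t) ^ (closedNbhd G W)ᶜ.card =
      ∑ S : Finset V, if closedNbhd G S = univ then t ^ S.card else 0 := by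
  calc ∑ W : Finset V, (-1) ^ W.card * (1 + t) ^ (closedNbhd G W)ᶜ.card
      = ∑ W : Finset V, ∑ S ∈ (closedNbhd G W)ᶜ.powerset, (-1) ^ W.card * t ^ S.card := by
        simp only [one_add_pow_card_eq_sum_powerset, mul_sum]
    _ = ∑ S : Finset V, ∑ W ∈ (closedNbhd G S)ᶜ.powerset, (-1) ^ W.card * t ^ S.card :=
        sum_comm' fun W S => by
          simp only [mem_univ, mem_powerset, and_true, true_and, subset_compl_closedNbhd_comm]
    _ = ∑ S : Finset V, if closedNbhd G S = univ then t ^ S.card else 0 := by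
        simp only [← sum_mul, sum_powerset_neg_one_pow_card_of_ring, compl_eq_empty_iff,
          ite_mul, one_mul, zero_mul]

end ClosedNeighbourhood

theorem J_at_special_point_eq_domination_polynomial
    {V : Type} [Fintype V] (G : SimpleGraph V) (t : ℝ) (ht : 1 + t ≠ 0) :
    (1 + t) ^ (Fintype.card V) * JP G (-1 / (1 + t)) (1 / (1 + t)) = DP G t := by
  rw [JP, mul_sum]
  simp only [one_add_pow_card_mul_JP_summand G t ht,
    sum_neg_one_pow_mul_one_add_pow_card_compl_closedNbhd, closedNbhd_eq_univ_iff]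
  rw [DP, sum_filter]
end

section
/- Let a be a vertex of a graph G. The sum of x^{|W|} y^{|N(W)|} over all subsets W ⊆ V(G) with a ∈ W and N(a) ∩ W = ∅ equals x · y^{|N(a)|} · J(G − N[a]; x, y). -/
open Finset
open scoped Classical

/-! Restricting to the vertices outside N[a] is a bijection from the sets W with a ∈ W and
W ∩ N(a) = ∅ onto the vertex sets W' of G − N[a], with inverse W' ↦ W' ∪ {a}. It lowers |W| by
one, and N(W) is the disjoint union of N(a) and the outer neighbourhood of W' in G − N[a]. -/

theorem insert_filter_eq_self {α : Type*} [DecidableEq α] {a : α} {W : Finset α}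
    {p : α → Prop} [DecidablePred p] (ha : a ∈ W) (hW : ∀ w ∈ W, w ≠ a → p w) :
    insert a (W.filter p) = W := by
  ext v
  by_cases hva : v = a
  · simp [hva, ha]
  · simpa [hva] using fun h => hW v h hva

theorem subtype_insert_map_subtype_of_mem {α : Type*} [DecidableEq α] {S : Set α}
    [DecidablePred (· ∈ S)] {a : α} (ha : a ∈ S) (W : Finset {v // v ∉ S}) :
    (insert a (W.map (Function.Embedding.subtype _))).subtype (· ∉ S) = W := by
  ext v
  have hva : (v : α) ≠ a := fun h => v.2 (h ▸ ha)
  simp [hva, v.2]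

section

variable {V : Type} {G : SimpleGraph V}

theorem not_adj_of_mem_insert_map {a : V} (W : Finset {v // v ∉ {v | v = a ∨ G.Adj a v}}) :
    ∀ w ∈ insert a (W.map (Function.Embedding.subtype _)), ¬ G.Adj a w := by
  simp only [mem_insert, mem_map, Function.Embedding.coe_subtype]
  rintro _ (rfl | ⟨w, -, rfl⟩)
  · exact G.loopless.irrefl _
  · exact fun h => w.2 (Or.inr h)

variable [Fintype V]

theorem map_extN_induce (p : V → Prop) [DecidablePred p] [Fintype {v // p v}]
    (W : Finset {v // p v}) :
    (extN (G.induce {v | p v}) W).map (Function.Embedding.subtype p) =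
      (extN G (W.map (Function.Embedding.subtype p))).filter p := by
  ext v
  simp only [extN, mem_map, mem_filter, mem_univ, true_and,
    SimpleGraph.comap_adj, Function.Embedding.subtype_apply]
  constructor
  · rintro ⟨v, ⟨hvW, w, hw, hvw⟩, rfl⟩
    exact ⟨⟨fun ⟨v', hv', hv'v⟩ => hvW (Subtype.ext hv'v ▸ hv'), w, ⟨w, hw, rfl⟩, hvw⟩,
      v.2⟩
  · rintro ⟨⟨hvW, _, ⟨w, hw, rfl⟩, hvw⟩, hv⟩
    exact ⟨⟨v, hv⟩, ⟨fun h => hvW ⟨_, h, rfl⟩, w, hw, hvw⟩, rfl⟩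

theorem extN_insert_of_forall_not_adj {a : V} {W : Finset V} (hW : ∀ w ∈ W, ¬ G.Adj a w) :
    extN G (insert a W) = univ.filter (fun v => G.Adj a v) ∪
      (extN G W).filter (fun v => v ∉ {v | v = a ∨ G.Adj a v}) := by
  ext v
  simp only [extN, mem_union, mem_filter, mem_univ, true_and, mem_insert, Set.mem_ofPred_eq,
    not_or, exists_eq_or_imp]
  by_cases hav : G.Adj a v
  · simpa [hav, hav.ne', hav.symm] using fun h => hW v h hav
  · simp only [G.adj_comm v a, hav, false_or, not_false_eq_true, and_true]
    tauto

theorem card_extN_insert_map {a : V} (W : Finset {v // v ∉ {v | v = a ∨ G.Adj a v}}) :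
    (extN G (insert a (W.map (Function.Embedding.subtype _)))).card =
      (univ.filter (fun v => G.Adj a v)).card +
        (extN (GdelSet G {v | v = a ∨ G.Adj a v}) W).card := by
  have hW : ∀ w ∈ W.map (Function.Embedding.subtype _), ¬ G.Adj a w :=
    fun w hw => not_adj_of_mem_insert_map W w (mem_insert_of_mem hw)
  have hdisj : Disjoint (univ.filter (fun v => G.Adj a v))
      ((extN G (W.map (Function.Embedding.subtype _))).filter
        (fun v => v ∉ {v | v = a ∨ G.Adj a v})) :=
    disjoint_left.2 fun v hv hv' => (mem_filter.1 hv').2 (Or.inr (mem_filter.1 hv).2)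
  rw [extN_insert_of_forall_not_adj hW, card_union_of_disjoint hdisj, GdelSet,
    ← card_map (Function.Embedding.subtype _), map_extN_induce]

end

theorem J_cond_mem_no_neighbor {V : Type} [Fintype V] (G : SimpleGraph V) (a : V) (x y : ℝ) :
    ∑ W ∈ Finset.univ.filter
        (fun W : Finset V => a ∈ W ∧ ∀ w ∈ W, ¬ G.Adj a w),
      x ^ W.card * y ^ (extN G W).card
      = x * y ^ (Finset.univ.filter (fun v => G.Adj a v)).card *
          JP (GdelSet G {v : V | v = a ∨ G.Adj a v}) x y := by
  set S : Set V := {v | v = a ∨ G.Adj a v}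
  have haS : a ∈ S := Or.inl rfl
  rw [JP, mul_sum]
  symm
  refine sum_nbij' (fun W => insert a (W.map (Function.Embedding.subtype _)))
    (fun W => W.subtype (· ∉ S)) (fun W _ => ?_) (fun _ _ => mem_univ _)
    (fun W _ => subtype_insert_map_subtype_of_mem haS W) (fun W hW => ?_) (fun W _ => ?_)
  · exact mem_filter.2 ⟨mem_univ _, mem_insert_self a _, not_adj_of_mem_insert_map W⟩
  · obtain ⟨ha, hW⟩ := (mem_filter.1 hW).2
    rw [subtype_map]
    exact insert_filter_eq_self ha fun w hw hwa => by simp [hwa, hW w hw]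
  · have haW : a ∉ W.map (Function.Embedding.subtype _) := fun h =>
      property_of_mem_map_subtype W h haS
    rw [card_insert_of_notMem haW, card_map, card_extN_insert_map]
    ring
end

section
/- Let a be a vertex of a graph G. Then Σ_{W : a ∈ W, N(a) ∩ W ≠ ∅} x^{|W|} y^{|N_G(W)|} = x · ( J(G∖a; x, y) − Σ_{W : N[a] ∩ W = ∅} x^{|W|} y^{|N_G(W)|} ), where G∖a is the vertex contraction of a (add edges between all pairs of vertices in N(a), then delete a). -/
open Finset
open scoped Classical

/-!
Subsets of `V` avoiding `a` are exactly the vertex sets of `G∖a`. If `W' ⊆ V \ {a}` meets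
`N(a)`, then `N_G(W' ∪ {a}) = N_{G∖a}(W')`: a neighbour of `a` outside `W'` is joined in `G∖a`
to a vertex of `W' ∩ N(a)`, and the new edges only reach vertices that `a` already dominates;
the extra vertex `a` accounts for the factor `x`. If `W'` misses `N(a)`, no new edge leaves `W'`,
so `N_G(W') = N_{G∖a}(W')`. Splitting `J(G∖a)` according to whether `W'` meets `N(a)` gives the
identity.
-/

namespace Finset

@[simp]
lemma subtype_map_subtype {α : Type} {p : α → Prop} [DecidablePred p]
    (s : Finset {x // p x}) : (s.map (Function.Embedding.subtype p)).subtype p = s := by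
  ext x
  simp [x.2]

section MapSubtype

variable {α : Type} {p : α → Prop} {s : Finset {x // p x}}

@[simp]
lemma coe_mem_map_subtype {x : {x // p x}} : (x : α) ∈ s.map (.subtype p) ↔ x ∈ s :=
  mem_map' _

lemma exists_mem_map_subtype {q : α → Prop} :
    (∃ y ∈ s.map (.subtype p), q y) ↔ ∃ x ∈ s, q x := by
  simp

end MapSubtype

section Reindex

variable {V : Type} [Fintype V] {a : V} {M : Type} [AddCommMonoid M]

lemma sum_filter_mem_eq_sum_insert_map (Q : Finset V → Prop) [DecidablePred Q]
    (F : Finset V → M) :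
    ∑ W ∈ univ.filter (fun W => a ∈ W ∧ Q W), F W =
      ∑ W' ∈ univ.filter (fun W' : Finset {v // v ≠ a} =>
          Q (insert a (W'.map (.subtype _)))),
        F (insert a (W'.map (.subtype _))) := by
  have insert_map_subtype {W : Finset V} (ha : a ∈ W) :
      insert a ((W.subtype (· ≠ a)).map (.subtype _)) = W := by
    rw [subtype_map, filter_ne', insert_erase ha]
  symm
  refine sum_nbij' (fun W' => insert a (W'.map (.subtype _))) (fun W => W.subtype (· ≠ a))
    ?_ ?_ ?_ ?_ (fun _ _ => rfl)
  · intro W' hW'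
    simp only [mem_filter, mem_univ, true_and] at hW' ⊢
    exact ⟨mem_insert_self _ _, hW'⟩
  · intro W hW
    simp only [mem_filter, mem_univ, true_and] at hW ⊢
    rw [insert_map_subtype hW.1]
    exact hW.2
  · intro W' _
    ext x
    simp [x.2]
  · intro W hW
    exact insert_map_subtype (mem_filter.1 hW).2.1

lemma sum_filter_not_mem_eq_sum_map (Q : Finset V → Prop) [DecidablePred Q]
    (F : Finset V → M) :
    ∑ W ∈ univ.filter (fun W => a ∉ W ∧ Q W), F W =
      ∑ W' ∈ univ.filter (fun W' : Finset {v // v ≠ a} => Q (W'.map (.subtype _))),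
        F (W'.map (.subtype _)) := by
  have map_subtype {W : Finset V} (ha : a ∉ W) : (W.subtype (· ≠ a)).map (.subtype _) = W :=
    subtype_map_of_mem fun v hv => ne_of_mem_of_not_mem hv ha
  symm
  refine sum_nbij' (fun W' => W'.map (.subtype _)) (fun W => W.subtype (· ≠ a))
    ?_ ?_ ?_ ?_ (fun _ _ => rfl)
  · intro W' hW'
    simp only [mem_filter, mem_univ, true_and] at hW' ⊢
    exact ⟨by simp, hW'⟩
  · intro W hW
    simp only [mem_filter, mem_univ, true_and] at hW ⊢
    rw [map_subtype hW.1]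
    exact hW.2
  · intro W' _
    exact subtype_map_subtype W'
  · intro W hW
    exact map_subtype (mem_filter.1 hW).2.1

end Reindex

end Finset

section Contraction

open Finset

variable {V : Type} [Fintype V] (G : SimpleGraph V) {a : V}

lemma mem_extN {W : Finset V} {v : V} : v ∈ extN G W ↔ v ∉ W ∧ ∃ w ∈ W, G.Adj v w := by
  simp [extN]

lemma mem_extN_Gcon {W' : Finset {v // v ≠ a}} {u : {v // v ≠ a}} :
    u ∈ extN (Gcon G a) W' ↔
      u ∉ W' ∧ ((∃ w ∈ W', G.Adj u w) ∨ (G.Adj u a ∧ ∃ w ∈ W', G.Adj a w)) := by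
  simp only [mem_extN, Gcon]
  constructor
  · rintro ⟨hu, w, hw, -, hadj | ⟨hua, haw⟩⟩
    exacts [⟨hu, .inl ⟨w, hw, hadj⟩⟩, ⟨hu, .inr ⟨hua, w, hw, haw⟩⟩]
  · have ne {w} (hw : w ∈ W') (hu : u ∉ W') : u ≠ w := fun e => hu (e ▸ hw)
    rintro ⟨hu, ⟨w, hw, hadj⟩ | ⟨hua, w, hw, haw⟩⟩
    exacts [⟨hu, w, hw, ne hw hu, .inl hadj⟩, ⟨hu, w, hw, ne hw hu, .inr ⟨hua, haw⟩⟩]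

lemma extN_insert_map_of_exists_adj {W' : Finset {v // v ≠ a}} (h : ∃ w ∈ W', G.Adj a w) :
    extN G (insert a (W'.map (.subtype _))) = (extN (Gcon G a) W').map (.subtype _) := by
  ext v
  by_cases hv : v = a
  · subst hv
    simp [mem_extN]
  · lift v to {v // v ≠ a} using hv
    rw [coe_mem_map_subtype, mem_extN_Gcon, mem_extN, mem_insert, coe_mem_map_subtype,
      exists_mem_insert, exists_mem_map_subtype]
    simp only [h, and_true, v.2, false_or]
    rw [or_comm]

lemma extN_map_of_not_exists_adj {W' : Finset {v // v ≠ a}} (h : ¬ ∃ w ∈ W', G.Adj a w) :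
    extN G (W'.map (.subtype _)) = (extN (Gcon G a) W').map (.subtype _) := by
  ext v
  by_cases hv : v = a
  · subst hv
    simp only [mem_extN, exists_mem_map_subtype, h, and_false, false_iff]
    exact notMem_map_subtype_of_not_property _ (not_not.2 rfl)
  · lift v to {v // v ≠ a} using hv
    rw [coe_mem_map_subtype, mem_extN_Gcon, mem_extN, coe_mem_map_subtype, exists_mem_map_subtype]
    simp only [h, and_false, or_false]

variable (a) {R : Type} [CommSemiring R] (x y : R)

lemma sum_filter_mem_exists_adj_eq :
    ∑ W ∈ univ.filter (fun W : Finset V => a ∈ W ∧ ∃ w ∈ W, G.Adj a w),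
        x ^ W.card * y ^ (extN G W).card =
      x * ∑ W' ∈ univ.filter (fun W' : Finset {v // v ≠ a} => ∃ w ∈ W', G.Adj a w),
        x ^ W'.card * y ^ (extN (Gcon G a) W').card := by
  rw [sum_filter_mem_eq_sum_insert_map, mul_sum]
  refine sum_congr (filter_congr fun W' _ => ?_) fun W' hW' => ?_
  · simp
  · rw [mem_filter] at hW'
    rw [extN_insert_map_of_exists_adj G hW'.2, card_map, card_insert_of_notMem (by simp),
      card_map, pow_succ]
    ring

lemma sum_filter_not_mem_forall_not_adj_eq :
    ∑ W ∈ univ.filter (fun W : Finset V => a ∉ W ∧ ∀ w ∈ W, ¬ G.Adj a w),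
        x ^ W.card * y ^ (extN G W).card =
      ∑ W' ∈ univ.filter (fun W' : Finset {v // v ≠ a} => ¬ ∃ w ∈ W', G.Adj a w),
        x ^ W'.card * y ^ (extN (Gcon G a) W').card := by
  rw [sum_filter_not_mem_eq_sum_map]
  refine sum_congr (filter_congr fun W' _ => ?_) fun W' hW' => ?_
  · simp
  · rw [mem_filter] at hW'
    rw [extN_map_of_not_exists_adj G hW'.2, card_map, card_map]

end Contraction

theorem J_cond_mem_with_neighbor {V : Type} [Fintype V] (G : SimpleGraph V) (a : V) (x y : ℝ) :
    ∑ W ∈ Finset.univ.filter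
        (fun W : Finset V => a ∈ W ∧ ∃ w ∈ W, G.Adj a w),
      x ^ W.card * y ^ (extN G W).card
      = x * (JP (Gcon G a) x y -
          ∑ W ∈ Finset.univ.filter
            (fun W : Finset V => a ∉ W ∧ ∀ w ∈ W, ¬ G.Adj a w),
          x ^ W.card * y ^ (extN G W).card) := by
  rw [sum_filter_mem_exists_adj_eq, sum_filter_not_mem_forall_not_adj_eq, JP,
    ← Finset.sum_filter_add_sum_filter_not Finset.univ
      (fun W' : Finset {v // v ≠ a} => ∃ w ∈ W', G.Adj a w)]
  ring
end

section
/- Let a be a vertex of a graph G. Then Σ_{W ⊆ V(G), a ∉ W} x^{|W|} y^{|N(W)|} = y · J(G − a; x, y) + (1 − y) · Σ_{W : N[a] ∩ W = ∅} x^{|W|} y^{|N(W)|}. -/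
open Finset
open scoped Classical

/-!
The sets `W ∌ a` are the images of the vertex sets `W'` of `G - a`, and `N_G(W)` is
`N_{G-a}(W')` plus the vertex `a` exactly when `W` meets `N(a)`. So `y ^ |N_G(W)|` is
`y * y ^ |N_{G-a}(W')|` if `W` meets `N(a)` and `y ^ |N_{G-a}(W')|` otherwise; in both cases it is
`y * y ^ |N_{G-a}(W')| + (1 - y) * [N[a] ∩ W = ∅] * y ^ |N_G(W)|`.
-/

open Function

section VertexDeletion

variable {V : Type} [Fintype V] (G : SimpleGraph V) (a : V)

theorem sum_filter_notMem_eq_sum_map_subtype {β : Type*} [AddCommMonoid β] (f : Finset V → β) :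
    ∑ W ∈ univ.filter (fun W : Finset V => a ∉ W), f W =
      ∑ W' : Finset {v : V // v ≠ a}, f (W'.map (Embedding.subtype _)) := by
  refine sum_nbij' (fun W => W.subtype (· ≠ a)) (fun W' => W'.map (Embedding.subtype _))
    (fun _ _ => mem_univ _) (fun W' _ => ?_) (fun W hW => ?_) (fun W' _ => ?_) (fun W hW => ?_)
  · simp
  · exact subtype_map_of_mem fun _ hv => ne_of_mem_of_not_mem hv (mem_filter.1 hW).2
  · ext v
    simp [v.2]
  · rw [subtype_map_of_mem fun _ hv => ne_of_mem_of_not_mem hv (mem_filter.1 hW).2]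

variable {a}

theorem extN_map_subtype_erase (W' : Finset {v : V // v ≠ a}) :
    (extN G (W'.map (Embedding.subtype _))).erase a =
      (extN (Gdel G a) W').map (Embedding.subtype _) := by
  ext v
  simp only [mem_erase, extN, mem_filter, mem_univ, true_and, mem_map, Embedding.coe_subtype,
    Gdel, SimpleGraph.induce_adj]
  constructor
  · rintro ⟨hva, hv, _, ⟨w', hw', rfl⟩, hadj⟩
    exact ⟨⟨v, hva⟩, ⟨fun h => hv ⟨_, h, rfl⟩, w', hw', hadj⟩, rfl⟩
  · rintro ⟨⟨v, hva⟩, ⟨hv, w', hw', hadj⟩, rfl⟩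
    refine ⟨hva, ?_, w', ⟨w', hw', rfl⟩, hadj⟩
    rintro ⟨u, hu, rfl⟩
    exact hv hu

theorem notMem_extN_map_subtype_iff (W' : Finset {v : V // v ≠ a}) :
    a ∉ extN G (W'.map (Embedding.subtype _)) ↔ ∀ w ∈ W', ¬ G.Adj a w := by
  simp only [extN, mem_filter, mem_univ, true_and, mem_map, Embedding.coe_subtype, not_and,
    not_exists, forall_exists_index, and_imp]
  refine ⟨fun h w hw hadj => h (fun u _ hu => u.2 hu) w w hw rfl hadj, ?_⟩
  rintro h - _ w hw rfl
  exact h w hw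

theorem card_extN_map_subtype (W' : Finset {v : V // v ≠ a}) :
    (extN G (W'.map (Embedding.subtype _))).card =
      (extN (Gdel G a) W').card + if ∀ w ∈ W', ¬ G.Adj a w then 0 else 1 := by
  rw [← card_map (Embedding.subtype _), ← extN_map_subtype_erase]
  split_ifs with hnadj
  · rw [erase_eq_of_notMem ((notMem_extN_map_subtype_iff G W').2 hnadj), add_zero]
  · exact (card_erase_add_one (not_not.1 (mt (notMem_extN_map_subtype_iff G W').1 hnadj))).symm

end VertexDeletion

theorem J_cond_not_mem {V : Type} [Fintype V] (G : SimpleGraph V) (a : V) (x y : ℝ) :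
    ∑ W ∈ Finset.univ.filter (fun W : Finset V => a ∉ W),
      x ^ W.card * y ^ (extN G W).card
      = y * JP (Gdel G a) x y +
        (1 - y) * ∑ W ∈ Finset.univ.filter
            (fun W : Finset V => a ∉ W ∧ ∀ w ∈ W, ¬ G.Adj a w),
          x ^ W.card * y ^ (extN G W).card := by
  rw [← filter_filter, sum_filter (fun W : Finset V => ∀ w ∈ W, ¬ G.Adj a w),
    sum_filter_notMem_eq_sum_map_subtype, sum_filter_notMem_eq_sum_map_subtype, JP, mul_sum, mul_sum, ← sum_add_distrib]
  refine sum_congr rfl fun W' _ => ?_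
  simp only [card_map, card_extN_map_subtype, forall_mem_map, Embedding.coe_subtype]
  split_ifs <;> ring
end

section
/- Suppose vertex v of graph G is domination covered by a neighbour u, i.e., u ∈ N(v) and N[v] ⊆ N[u]. Then J(G) = (x+y)J(G−v) − y(x+y)J(G−u−v) + yJ(G−u) + (1−y)( J(G∖v) − yJ((G−u)∖v) − xJ((G−v)∖u) ) − x(1−y) y^{|N(u)|−1} J(G − N[u]). -/
open Finset
open scoped Classical

/-!
Every graph in the recurrence lives on a subset of `V` (`G - N[u]` on `V ∖ N[u]`), so each `J` is
a sum over subsets of `V`, and splitting a subset by its trace on `{u, v}` reduces the identity to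
one for each `W ⊆ V ∖ {u, v}`. For such `W` the outer neighbourhoods of `W`, `W + u`, `W + v` in
the various graphs differ only in `u`, `v` and the vertices reached through a contracted vertex,
and since `N(v) ∖ {u} ⊆ N(u)`, adding `v` to `W + u` changes nothing outside `{u, v}`. What remains
is a polynomial identity in each of three cases: `W` meets `N(v)`; `W` meets `N(u)` but not
`N(v)`; `W` misses `N(u)`, the only case in which `W` also indexes a term of `J(G - N[u])`.
-/

noncomputable section

variable {V : Type}

def extNOn (s : Finset V) (r : V → V → Prop) (W : Finset V) : Finset V :=
  s.filter fun z => z ∉ W ∧ ∃ w ∈ W, r z w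

def JWeight (x y : ℝ) (s : Finset V) (r : V → V → Prop) (W : Finset V) : ℝ :=
  x ^ #W * y ^ #(extNOn s r W)

def JOn (x y : ℝ) (s : Finset V) (r : V → V → Prop) : ℝ :=
  ∑ W ∈ s.powerset, JWeight x y s r W

def contractAdj (G : SimpleGraph V) (c z w : V) : Prop :=
  z ≠ w ∧ (G.Adj z w ∨ G.Adj z c ∧ G.Adj c w)

lemma card_extNOn_insert {s : Finset V} {a : V} (ha : a ∉ s) (r : V → V → Prop) (W : Finset V) :
    #(extNOn (insert a s) r W) = #(extNOn s r W) + if a ∉ W ∧ ∃ w ∈ W, r a w then 1 else 0 := by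
  rw [extNOn, filter_insert]
  split_ifs
  · exact card_insert_of_notMem fun h => ha (mem_filter.mp h).1
  · rfl

lemma extNOn_insert_of_absorbed {s : Finset V} {a b : V} (hb : b ∉ s) {r : V → V → Prop}
    (hba : ∀ z ∈ s, r z b → r z a) (W : Finset V) :
    extNOn s r (insert b (insert a W)) = extNOn s r (insert a W) := by
  ext z
  simp only [extNOn, mem_filter, mem_insert, exists_eq_or_imp, not_or]
  constructor
  · rintro ⟨hz, ⟨-, hza, hzW⟩, hzb | hza' | hzW'⟩
    exacts [⟨hz, ⟨hza, hzW⟩, Or.inl (hba z hz hzb)⟩, ⟨hz, ⟨hza, hzW⟩, Or.inl hza'⟩,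
      ⟨hz, ⟨hza, hzW⟩, Or.inr hzW'⟩]
  · rintro ⟨hz, ⟨hza, hzW⟩, h⟩
    exact ⟨hz, ⟨fun e => hb (e ▸ hz), hza, hzW⟩, Or.inr h⟩

lemma extNOn_contractAdj (G : SimpleGraph V) {s : Finset V} {c : V} (hc : c ∉ s) (W : Finset V) :
    extNOn s (contractAdj G c) W =
      if ∃ w ∈ W, G.Adj c w then extNOn s G.Adj (insert c W) else extNOn s G.Adj W := by
  ext z
  split_ifs with hcW
  · simp only [extNOn, mem_filter, mem_insert, exists_eq_or_imp, not_or]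
    simp only [contractAdj]
    constructor
    · rintro ⟨hz, hzW, w, hw, -, hzw | ⟨hzc, -⟩⟩
      · exact ⟨hz, ⟨ne_of_mem_of_not_mem hz hc, hzW⟩, Or.inr ⟨w, hw, hzw⟩⟩
      · exact ⟨hz, ⟨ne_of_mem_of_not_mem hz hc, hzW⟩, Or.inl hzc⟩
    · obtain ⟨w₀, hw₀, hcw₀⟩ := hcW
      rintro ⟨hz, ⟨-, hzW⟩, hzc | ⟨w, hw, hzw⟩⟩
      · exact ⟨hz, hzW, w₀, hw₀, fun e => hzW (e ▸ hw₀), Or.inr ⟨hzc, hcw₀⟩⟩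
      · exact ⟨hz, hzW, w, hw, hzw.ne, Or.inl hzw⟩
  · simp only [extNOn, mem_filter]
    simp only [contractAdj]
    constructor
    · rintro ⟨hz, hzW, w, hw, -, hzw | ⟨-, hcw⟩⟩
      · exact ⟨hz, hzW, w, hw, hzw⟩
      · exact absurd ⟨w, hw, hcw⟩ hcW
    · rintro ⟨hz, hzW, w, hw, hzw⟩
      exact ⟨hz, hzW, w, hw, hzw.ne, Or.inl hzw⟩

lemma card_extNOn_insert_of_forall_not_adj (G : SimpleGraph V) {s : Finset V} {u : V}
    (hu : u ∉ s) {W : Finset V} (hW : ∀ w ∈ W, ¬ G.Adj u w) :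
    #(extNOn s G.Adj (insert u W)) =
      #(s.filter (G.Adj u)) + #(extNOn (s.filter (¬ G.Adj u ·)) G.Adj W) := by
  rw [← card_filter_add_card_filter_not (s := extNOn s G.Adj (insert u W)) (p := G.Adj u)]
  congr 2
  · ext z
    simp only [extNOn, mem_filter, mem_insert, exists_eq_or_imp, not_or]
    constructor
    · rintro ⟨⟨hz, -⟩, huz⟩
      exact ⟨hz, huz⟩
    · rintro ⟨hz, huz⟩
      exact ⟨⟨hz, ⟨huz.ne', fun hzW => hW z hzW huz⟩, Or.inl huz.symm⟩, huz⟩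
  · ext z
    simp only [extNOn, mem_filter, mem_insert, exists_eq_or_imp, not_or]
    constructor
    · rintro ⟨⟨hz, ⟨-, hzW⟩, hzu | hN⟩, huz⟩
      · exact absurd hzu.symm huz
      · exact ⟨⟨hz, huz⟩, hzW, hN⟩
    · rintro ⟨⟨hz, huz⟩, hzW, hN⟩
      exact ⟨⟨hz, ⟨ne_of_mem_of_not_mem hz hu, hzW⟩, Or.inr hN⟩, huz⟩

lemma JOn_filter (x y : ℝ) (s : Finset V) (p : V → Prop) [DecidablePred p] (r : V → V → Prop) :
    JOn x y (s.filter p) r =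
      ∑ W ∈ s.powerset, if ∀ w ∈ W, p w then JWeight x y (s.filter p) r W else 0 := by
  rw [JOn, ← sum_filter]
  congr 1
  ext W
  simp only [mem_powerset, mem_filter, subset_iff]
  exact ⟨fun h => ⟨fun z hz => (h hz).1, fun z hz => (h hz).2⟩, fun h z hz => ⟨h.1 hz, h.2 z hz⟩⟩

lemma extN_image {α : Type} [Fintype α] (H : SimpleGraph α) {f : α → V}
    (hf : Function.Injective f) {r : V → V → Prop} (hr : ∀ a b, H.Adj a b ↔ r (f a) (f b))
    (W : Finset α) : (extN H W).image f = extNOn (univ.image f) r (W.image f) := by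
  ext z
  simp only [extN, extNOn, mem_image, mem_filter, mem_univ, true_and, hr]
  constructor
  · rintro ⟨a, ⟨haW, b, hb, hab⟩, rfl⟩
    exact ⟨⟨a, rfl⟩, fun ⟨c, hc, hca⟩ => haW (hf hca ▸ hc), ⟨f b, ⟨b, hb, rfl⟩, hab⟩⟩
  · rintro ⟨⟨a, rfl⟩, haW, _, ⟨b, hb, rfl⟩, hab⟩
    exact ⟨a, ⟨fun h => haW ⟨a, h, rfl⟩, b, hb, hab⟩, rfl⟩

lemma JP_eq_JOn_image {α : Type} [Fintype α] (H : SimpleGraph α) {f : α → V}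
    (hf : Function.Injective f) {r : V → V → Prop} (hr : ∀ a b, H.Adj a b ↔ r (f a) (f b))
    (x y : ℝ) : JP H x y = JOn x y (univ.image f) r := by
  rw [JOn, powerset_image, sum_image fun _ _ _ _ h => image_injective hf h, powerset_univ, JP]
  refine sum_congr rfl fun W _ => ?_
  rw [JWeight, ← extN_image H hf hr, card_image_of_injective _ hf,
    card_image_of_injective _ hf]

section

variable [Fintype V] (G : SimpleGraph V) (x y : ℝ)

lemma JP_eq_JOn_univ : JP G x y = JOn x y univ G.Adj := by
  simpa using JP_eq_JOn_image G Function.injective_id (fun _ _ => Iff.rfl) x y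

lemma JP_Gdel (a : V) : JP (Gdel G a) x y = JOn x y (univ.erase a) G.Adj := by
  rw [JP_eq_JOn_image _ Subtype.val_injective (fun _ _ => Iff.rfl)]
  congr 1
  ext z
  simp

-- The instances are arguments so that the lemma applies to whichever ones a concrete `S` gets.
lemma JP_GdelSet (S : Set V) [Fintype {z // z ∉ S}] [DecidablePred (· ∉ S)] :
    JP (GdelSet G S) x y = JOn x y (univ.filter (· ∉ S)) G.Adj := by
  rw [JP_eq_JOn_image _ Subtype.val_injective (fun _ _ => Iff.rfl)]
  congr 1
  ext z
  simp

lemma filter_not_mem_closedNbhd {u v : V} (huv : G.Adj u v) :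
    univ.filter (· ∉ {w : V | w = u ∨ G.Adj u w}) = ((univ.erase v).erase u).filter (¬ G.Adj u ·) := by
  ext z
  simp only [mem_filter, mem_erase, mem_univ, Set.mem_ofPred_eq, not_or, and_true, true_and]
  exact ⟨fun ⟨hzu, huz⟩ => ⟨⟨hzu, fun hzv => huz (hzv ▸ huv)⟩, huz⟩,
    fun ⟨⟨hzu, _⟩, huz⟩ => ⟨hzu, huz⟩⟩

lemma card_filter_adj_sub_one {u v : V} (huv : G.Adj u v) :
    #(univ.filter (G.Adj u)) - 1 = #(((univ.erase v).erase u).filter (G.Adj u)) := by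
  rw [← card_erase_of_mem (mem_filter.2 ⟨mem_univ v, huv⟩), filter_erase, filter_erase,
    erase_eq_of_notMem (fun h => G.loopless.irrefl u (mem_filter.1 (mem_of_mem_erase h)).2)]

lemma JP_Gcon (a : V) : JP (Gcon G a) x y = JOn x y (univ.erase a) (contractAdj G a) := by
  rw [JP_eq_JOn_image _ Subtype.val_injective (r := contractAdj G a)
    (fun _ _ => and_congr_left' Subtype.ext_iff.not)]
  congr 1
  ext z
  simp

lemma JP_Gcon_Gdel {a b : V} (hab : a ≠ b) :
    JP (Gcon (Gdel G b) ⟨a, hab⟩) x y = JOn x y ((univ.erase b).erase a) (contractAdj G a) := by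
  rw [JP_eq_JOn_image _ (Subtype.val_injective.comp Subtype.val_injective) (r := contractAdj G a)
    (fun _ _ => and_congr_left' (Subtype.ext_iff.trans Subtype.ext_iff).not)]
  congr 1
  ext z
  simp [and_comm]

end

lemma JWeight_domination_covered (G : SimpleGraph V) (x y : ℝ) {s : Finset V} {u v : V}
    (huv : G.Adj u v) (hus : u ∉ s) (hvs : v ∉ s) (hcov : ∀ z ∈ s, G.Adj z v → G.Adj z u)
    {W : Finset V} (hW : W ⊆ s) :
    JWeight x y (insert v (insert u s)) G.Adj W
        + JWeight x y (insert v (insert u s)) G.Adj (insert u W)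
        + (JWeight x y (insert v (insert u s)) G.Adj (insert v W)
          + JWeight x y (insert v (insert u s)) G.Adj (insert v (insert u W)))
      = (x + y) * (JWeight x y (insert u s) G.Adj W + JWeight x y (insert u s) G.Adj (insert u W))
        - y * (x + y) * JWeight x y s G.Adj W
        + y * (JWeight x y (insert v s) G.Adj W + JWeight x y (insert v s) G.Adj (insert v W))
        + (1 - y) * (JWeight x y (insert u s) (contractAdj G v) W
            + JWeight x y (insert u s) (contractAdj G v) (insert u W)
            - y * JWeight x y s (contractAdj G v) W
            - x * JWeight x y s (contractAdj G u) W)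
        - x * (1 - y) * y ^ #(s.filter (G.Adj u)) *
            (if ∀ w ∈ W, ¬ G.Adj u w then JWeight x y (s.filter (¬ G.Adj u ·)) G.Adj W else 0) := by
  have hu : u ∉ W := fun h => hus (hW h)
  have hv : v ∉ W := fun h => hvs (hW h)
  have hvus : v ∉ insert u s := by simp [huv.ne', hvs]
  have hvuW : v ∉ insert u W := by simp [huv.ne', hv]
  have huvW : u ∉ insert v W := by simp [huv.ne, hu]
  have hu_mem : u ∈ insert v (insert u W) := mem_insert_of_mem (mem_insert_self u W)
  simp only [JWeight, extNOn_contractAdj G hus, extNOn_contractAdj G hvs, extNOn_contractAdj G hvus,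
    exists_mem_insert, huv.symm, true_or, if_true]
  simp only [apply_ite card, card_extNOn_insert hvus, card_extNOn_insert hus, card_extNOn_insert hvs,
    extNOn_insert_of_absorbed hvs hcov, card_insert_of_notMem hu, card_insert_of_notMem hv,
    card_insert_of_notMem hvuW, exists_mem_insert, mem_insert_self, huv, huv.symm, hu, hv, hvuW,
    huvW, hu_mem]
  simp only [not_true, not_false_eq_true, true_and, false_and, true_or, if_true, if_false]
  by_cases ha : ∃ w ∈ W, G.Adj u w
  · have hnot : ¬ ∀ w ∈ W, ¬ G.Adj u w := fun h => ha.elim fun w ⟨hw, huw⟩ => h w hw huw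
    by_cases hb : ∃ w ∈ W, G.Adj v w <;> simp only [ha, hb, hnot, if_true, if_false] <;> ring
  · have hb : ¬ ∃ w ∈ W, G.Adj v w := fun ⟨w, hw, hvw⟩ =>
      ha ⟨w, hw, (hcov w (hW hw) hvw.symm).symm⟩
    have hall : ∀ w ∈ W, ¬ G.Adj u w := fun w hw huw => ha ⟨w, hw, huw⟩
    simp only [ha, hb, if_pos hall, if_false, card_extNOn_insert_of_forall_not_adj G hus hall]
    ring

end

theorem J_domination_covered {V : Type} [Fintype V] (G : SimpleGraph V) (u v : V)
    (huv : G.Adj u v) (hcov : ∀ w, G.Adj v w → (w = u ∨ G.Adj u w)) (x y : ℝ) :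
    JP G x y
      = (x + y) * JP (Gdel G v) x y
        - y * (x + y) * JP (GdelSet G {w : V | w = u ∨ w = v}) x y
        + y * JP (Gdel G u) x y
        + (1 - y) * (JP (Gcon G v) x y
            - y * JP (Gcon (Gdel G u) ⟨v, huv.ne'⟩) x y
            - x * JP (Gcon (Gdel G v) ⟨u, huv.ne⟩) x y)
        - x * (1 - y) * y ^ ((Finset.univ.filter (fun w => G.Adj u w)).card - 1) *
            JP (GdelSet G {w : V | w = u ∨ G.Adj u w}) x y := by
  have h_pair : univ.filter (· ∉ {w : V | w = u ∨ w = v}) = (univ.erase v).erase u := by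
    ext z
    simp [and_comm]
  rw [JP_Gcon_Gdel, JP_Gcon_Gdel, erase_right_comm, JP_Gcon, JP_Gdel, JP_Gdel, JP_GdelSet,
    JP_GdelSet, h_pair, filter_not_mem_closedNbhd G huv, card_filter_adj_sub_one G huv,
    JOn_filter, JP_eq_JOn_univ G]
  set s := (univ.erase v).erase u with hs
  have hus : u ∉ s := notMem_erase u _
  have hvs : v ∉ s := fun h => notMem_erase v _ (mem_of_mem_erase h)
  have hvus : v ∉ insert u s := by simp [huv.ne', hvs]
  have h_erase_v : univ.erase v = insert u s :=
    (insert_erase (mem_erase.2 ⟨huv.ne, mem_univ u⟩)).symm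
  have h_erase_u : univ.erase u = insert v s := by
    rw [hs, erase_right_comm, insert_erase (mem_erase.2 ⟨huv.ne', mem_univ v⟩)]
  rw [h_erase_u, h_erase_v, ← insert_erase (mem_univ v), h_erase_v]
  simp only [JOn, sum_powerset_insert hvus, sum_powerset_insert hus, sum_powerset_insert hvs]
  have hcov_s : ∀ z ∈ s, G.Adj z v → G.Adj z u := fun z hz hzv =>
    ((hcov z hzv.symm).resolve_left (ne_of_mem_erase hz)).symm
  have h_sum := sum_congr rfl fun W hW =>
    JWeight_domination_covered G x y huv hus hvs hcov_s (mem_powerset.mp hW)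
  simp only [sum_add_distrib, sum_sub_distrib, ← mul_sum] at h_sum
  linear_combination h_sum
end

section
/- Let v be a cut-vertex of a graph G with G split as above into pieces C₁, …, C_l each containing v. Then Σ_{W ⊆ V(G), v ∈ W} x^{|W|} y^{|N_G(W)|} · x^{l−1} = Π_{j=1}^{l} ( Σ_{W_j ⊆ V(C_j), v ∈ W_j} x^{|W_j|} y^{|N_{C_j}(W_j)|} ). -/
open Finset
open scoped Classical

/-- The piece of `G` induced by a cut vertex `v` together with the connected
component `c` of `G − v`. -/
noncomputable def Cpart {V : Type} [Fintype V] (G : SimpleGraph V) (v : V)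
    (c : (Gdel G v).ConnectedComponent) :
    SimpleGraph {w : V // w = v ∨ ∃ h : w ≠ v, (Gdel G v).connectedComponentMk ⟨w, h⟩ = c} :=
  G.induce {w : V | w = v ∨ ∃ h : w ≠ v, (Gdel G v).connectedComponentMk ⟨w, h⟩ = c}

/-- The copy of the cut vertex `v` inside the piece `Cpart G v c`. -/
noncomputable def vcopy {V : Type} [Fintype V] (G : SimpleGraph V) (v : V)
    (c : (Gdel G v).ConnectedComponent) :
    {w : V // w = v ∨ ∃ h : w ≠ v, (Gdel G v).connectedComponentMk ⟨w, h⟩ = c} :=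
  ⟨v, Or.inl rfl⟩

/-!
Restricting `W ∋ v` to the pieces, `W ↦ (W ∩ V(Cᵢ))ᵢ`, is a bijection onto the tuples
of sets `Wᵢ ∋ v`, with inverse the union. The cut vertex is counted once in `|W|` but
`l` times in `∑ |Wᵢ|`, which is the factor `x^(l-1)`. Since `v ∉ N(W)` and every edge
avoiding `v` lies in a single piece, `N_G(W)` is the disjoint union of the `N_{Cᵢ}(Wᵢ)`.
-/

namespace SimpleGraph

/-- The sets `S i` are the vertex sets `V(Cᵢ)` of a decomposition of `G` into pieces glued at
the cut vertex `v`. -/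
structure IsCutCover {V ι : Type} (G : SimpleGraph V) (v : V) (S : ι → Set V) : Prop where
  mem_self : ∀ i, v ∈ S i
  exists_mem : ∀ w, ∃ i, w ∈ S i
  eq_of_mem : ∀ {w}, w ≠ v → ∀ {i j}, w ∈ S i → w ∈ S j → i = j
  mem_of_adj : ∀ {i a b}, a ≠ v → a ∈ S i → G.Adj a b → b ∈ S i

namespace IsCutCover

variable {V ι : Type} {G : SimpleGraph V} {v : V} {S : ι → Set V}

theorem eq_of_subtype_eq (h : IsCutCover G v S) {W W' : Finset V}
    (hWW' : ∀ i, W.subtype (· ∈ S i) = W'.subtype (· ∈ S i)) : W = W' := by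
  ext w
  obtain ⟨i, hi⟩ := h.exists_mem w
  simpa using congrArg (⟨w, hi⟩ ∈ ·) (hWW' i)

theorem subtype_biUnion [Fintype ι] (h : IsCutCover G v S) (U : ∀ i, Finset (S i))
    (hU : ∀ i, ⟨v, h.mem_self i⟩ ∈ U i) (i : ι) :
    (univ.biUnion fun j => (U j).map (Function.Embedding.subtype _)).subtype (· ∈ S i) =
      U i := by
  ext u
  simp only [mem_subtype, mem_biUnion, mem_univ, true_and, mem_map,
    Function.Embedding.subtype_apply]
  refine ⟨fun ⟨j, a, ha, hau⟩ => ?_, fun hu => ⟨i, u, hu, rfl⟩⟩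
  by_cases huv : (u : V) = v
  · exact (Subtype.ext huv : u = ⟨v, h.mem_self i⟩) ▸ hU i
  · obtain rfl : j = i := h.eq_of_mem huv (hau ▸ a.2) u.2
    exact (Subtype.ext hau : a = u) ▸ ha

theorem extN_subtype [Fintype V] [∀ i, Fintype (S i)] (h : IsCutCover G v S) {W : Finset V}
    (hW : v ∈ W) (i : ι) :
    extN (G.induce (S i)) (W.subtype (· ∈ S i)) = (extN G W).subtype (· ∈ S i) := by
  ext u
  simp only [extN, mem_subtype, mem_filter, mem_univ, true_and, comap_adj,
    Function.Embedding.subtype_apply, Subtype.exists, exists_and_right, exists_prop]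
  refine and_congr_right fun hu =>
    ⟨fun ⟨w, ⟨_, hw⟩, hadj⟩ => ⟨w, hw, hadj⟩, fun ⟨w, hw, hadj⟩ => ?_⟩
  have hwi : w ∈ S i := by
    by_cases hwv : w = v
    · exact hwv ▸ h.mem_self i
    · exact h.mem_of_adj (fun e : (u : V) = v => hu (e ▸ hW)) u.2 hadj
  exact ⟨w, ⟨hwi, hw⟩, hadj⟩

variable [Fintype ι]

theorem card_filter_mem (h : IsCutCover G v S) (w : V) :
    #{i | w ∈ S i} = if w = v then Fintype.card ι else 1 := by
  split_ifs with hw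
  · subst hw
    simp [h.mem_self]
  · obtain ⟨i, hi⟩ := h.exists_mem w
    rw [card_eq_one]
    exact ⟨i, eq_singleton_iff_unique_mem.mpr
      ⟨by simpa using hi, fun j hj => h.eq_of_mem hw (by simpa using hj) hi⟩⟩

theorem sum_card_filter (h : IsCutCover G v S) (A : Finset V) :
    ∑ i, #(A.filter (· ∈ S i)) = ∑ w ∈ A, if w = v then Fintype.card ι else 1 := by
  simp_rw [card_filter, ← h.card_filter_mem, card_filter]
  exact sum_comm

theorem sum_card_filter_of_notMem (h : IsCutCover G v S) {A : Finset V} (hA : v ∉ A) :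
    ∑ i, #(A.filter (· ∈ S i)) = #A := by
  rw [h.sum_card_filter, card_eq_sum_ones]
  exact sum_congr rfl fun w hw => if_neg (ne_of_mem_of_not_mem hw hA)

theorem sum_card_filter_of_mem (h : IsCutCover G v S) {A : Finset V} (hA : v ∈ A) :
    ∑ i, #(A.filter (· ∈ S i)) = #A + (Fintype.card ι - 1) := by
  have hι : 0 < Fintype.card ι := Fintype.card_pos_iff.mpr ⟨(h.exists_mem v).choose⟩
  rw [h.sum_card_filter, ← add_sum_erase _ _ hA, if_pos rfl,
    sum_congr rfl fun w hw => if_neg (ne_of_mem_erase hw)]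
  simp only [sum_const, smul_eq_mul, mul_one, card_erase_of_mem hA]
  have := card_pos.mpr ⟨v, hA⟩
  omega

theorem sum_mul_pow [Fintype V] [∀ i, Fintype (S i)] (h : IsCutCover G v S) (x y : ℝ) :
    (∑ W ∈ univ.filter (fun W : Finset V => v ∈ W), x ^ #W * y ^ #(extN G W))
        * x ^ (Fintype.card ι - 1)
      = ∏ i, ∑ U ∈ univ.filter (fun U : Finset (S i) => ⟨v, h.mem_self i⟩ ∈ U),
          x ^ #U * y ^ #(extN (G.induce (S i)) U) := by
  rw [prod_univ_sum, sum_mul]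
  refine sum_nbij (fun W i => W.subtype (· ∈ S i)) ?_ ?_ ?_ ?_
  · intro W hW
    simp only [mem_filter, mem_univ, true_and] at hW
    simp [Fintype.mem_piFinset, hW]
  · exact fun W _ W' _ hWW' => h.eq_of_subtype_eq (congrFun hWW')
  · intro U hU
    simp only [coe_filter, mem_univ, true_and, Fintype.coe_piFinset, Set.mem_pi, Set.mem_univ,
      Set.mem_ofPred_eq, forall_const] at hU
    refine ⟨univ.biUnion fun j => (U j).map (Function.Embedding.subtype _), ?_,
      funext (h.subtype_biUnion U hU)⟩
    obtain ⟨i, -⟩ := h.exists_mem v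
    simpa using ⟨i, h.mem_self i, hU i⟩
  · intro W hW
    simp only [mem_filter, mem_univ, true_and] at hW
    have hvN : v ∉ extN G W := by simp [extN, hW]
    rw [prod_mul_distrib, prod_pow_eq_pow_sum, prod_pow_eq_pow_sum]
    simp only [h.extN_subtype hW, card_subtype]
    rw [h.sum_card_filter_of_mem hW, h.sum_card_filter_of_notMem hvN, pow_add]
    ring

end IsCutCover

end SimpleGraph

theorem isCutCover_gdel_components {V : Type} (G : SimpleGraph V) (v : V)
    [Nonempty (Gdel G v).ConnectedComponent] :
    G.IsCutCover v fun c =>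
      {w | w = v ∨ ∃ h : w ≠ v, (Gdel G v).connectedComponentMk ⟨w, h⟩ = c} where
  mem_self _ := Or.inl rfl
  exists_mem w := by
    by_cases hw : w = v
    · exact ⟨Classical.arbitrary _, Or.inl hw⟩
    · exact ⟨_, Or.inr ⟨hw, rfl⟩⟩
  eq_of_mem hw := by
    intro c c' hc hc'
    obtain ⟨_, rfl⟩ := hc.resolve_left hw
    obtain ⟨_, rfl⟩ := hc'.resolve_left hw
    rfl
  mem_of_adj {c a b} ha hac hab := by
    by_cases hb : b = v
    · exact Or.inl hb
    obtain ⟨_, rfl⟩ := hac.resolve_left ha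
    have hba : (Gdel G v).Adj ⟨b, hb⟩ ⟨a, ha⟩ := by simpa [Gdel] using hab.symm
    exact Or.inr ⟨hb, SimpleGraph.ConnectedComponent.sound hba.reachable⟩

theorem J_cut_vertex_mem_general {V : Type} [Fintype V] (G : SimpleGraph V) (v : V)
    (hcut : 2 ≤ Fintype.card ((Gdel G v).ConnectedComponent)) (x y : ℝ) :
    (∑ W ∈ Finset.univ.filter (fun W : Finset V => v ∈ W),
        x ^ W.card * y ^ (extN G W).card)
      * x ^ (Fintype.card ((Gdel G v).ConnectedComponent) - 1)
      = ∏ c : (Gdel G v).ConnectedComponent,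
          ∑ W ∈ Finset.univ.filter (fun W => vcopy G v c ∈ W),
            x ^ W.card * y ^ (extN (Cpart G v c) W).card := by
  have : Nonempty (Gdel G v).ConnectedComponent := Fintype.card_pos_iff.mp (by omega)
  exact (isCutCover_gdel_components G v).sum_mul_pow x y

theorem J_cut_vertex_mem {V : Type} [Fintype V] (G : SimpleGraph V) (v : V)
    (hconn : G.Connected)
    (hcut : 2 ≤ Fintype.card ((Gdel G v).ConnectedComponent)) (x y : ℝ) :
    (∑ W ∈ Finset.univ.filter (fun W : Finset V => v ∈ W),
        x ^ W.card * y ^ (extN G W).card)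
      * x ^ (Fintype.card ((Gdel G v).ConnectedComponent) - 1)
      = ∏ c : (Gdel G v).ConnectedComponent,
          ∑ W ∈ Finset.univ.filter (fun W => vcopy G v c ∈ W),
            x ^ W.card * y ^ (extN (Cpart G v c) W).card :=
  J_cut_vertex_mem_general G v hcut x y
end

section
/- Let M be a finite simple graph with non-adjacent vertices a, b such that every vertex of N(a) ∩ N(b) is adjacent to every other vertex of M, and every vertex of N(a) \ N(b) is adjacent to every vertex of N(b). Form M₁ from M by adding new vertices c, d and edges ab, bc, cd, ad; form M₂ from M by adding new vertices c, d and edges ac, bc, ad, bd. Then J(M₁;x,y) = J(M₂;x,y). -/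
open Finset
open scoped Classical

/-- M₁: add new vertices c = inr false and d = inr true to M together with
the edges ab, bc, cd, ad. -/
noncomputable def addSquare₁ {V : Type} (M : SimpleGraph V) (a b : V) :
    SimpleGraph (V ⊕ Bool) :=
  SimpleGraph.fromRel (fun p q => match p, q with
    | Sum.inl p, Sum.inl q => M.Adj p q ∨ (p = a ∧ q = b)
    | Sum.inl p, Sum.inr c => (p = b ∧ c = false) ∨ (p = a ∧ c = true)
    | Sum.inr c, Sum.inr c' => c ≠ c'
    | _, _ => False)

/-- M₂: add new vertices c = inr false and d = inr true to M together with
the edges ac, bc, ad, bd. -/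
noncomputable def addSquare₂ {V : Type} (M : SimpleGraph V) (a b : V) :
    SimpleGraph (V ⊕ Bool) :=
  SimpleGraph.fromRel (fun p q => match p, q with
    | Sum.inl p, Sum.inl q => M.Adj p q
    | Sum.inl p, Sum.inr _ => p = a ∨ p = b
    | _, _ => False)

/-!
`J` sums `x ^ |W| * y ^ |N(W)|` over vertex sets `W`, so it suffices to find a size-preserving
involution `W ↦ W'` with `|N_{M₁}(W)| = |N_{M₂}(W')|`. Both graphs add a 4-cycle on `a, b, c, d`
(`a b c d` in `M₁`, `a c b d` in `M₂`) and agree elsewhere, so only the four square vertices can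
be counted differently, and a finite check shows that they are counted equally often unless `W`
meets the square only in `a` or `d` while `b` has an `M`-neighbour in `W`, or symmetrically only
in `b` or `c` while `a` has one. On those sets we exchange `a ↔ d`, resp. `b ↔ c`. This does not
change which vertices outside the square are dominated: the hypotheses make every neighbour of `a`
adjacent to every other neighbour of `b`, so a vertex dominated only by `a` is also dominated by
the neighbour of `b` in `W`.
-/

theorem Function.Involutive.ite_ite {α : Type*} {p q : α → Prop} [DecidablePred p]
    [DecidablePred q] {f g : α → α} (hf : Function.Involutive f) (hg : Function.Involutive g)
    (hpf : ∀ x, p (f x) ↔ p x) (hqg : ∀ x, q (g x) ↔ q x) (hpq : ∀ x, p x → ¬ q x) :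
    Function.Involutive fun x => if p x then f x else if q x then g x else x := by
  intro x
  by_cases hp : p x
  · simp [hp, hpf, hf x]
  by_cases hq : q x
  · have hp' : ¬ p (g x) := fun h => hpq _ h ((hqg x).2 hq)
    simp [hp, hq, hp', hqg, hg x]
  · simp [hp, hq]

namespace AddSquare
open Sum

variable {V : Type} {M : SimpleGraph V} {a b : V}

lemma adj_of_adj_of_adj (hcommon : ∀ w, M.Adj a w → M.Adj b w → ∀ z, z ≠ w → M.Adj w z)
    (hside : (∀ w z, M.Adj a w → ¬ M.Adj b w → M.Adj b z → M.Adj w z) ∨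
      (∀ w z, M.Adj b w → ¬ M.Adj a w → M.Adj a z → M.Adj w z))
    (u s : V) (hau : M.Adj a u) (hbs : M.Adj b s) (hus : u ≠ s) : M.Adj u s := by
  by_cases hbu : M.Adj b u
  · exact hcommon u hau hbu s hus.symm
  rcases hside with h | h
  · exact h u s hau hbu hbs
  · by_cases has : M.Adj a s
    · exact (hcommon s has hbs u hus).symm
    · exact (h s u hbs has hau).symm

def HasNbr (M : SimpleGraph V) (u : V) (W : Finset (V ⊕ Bool)) : Prop :=
  ∃ v, inl v ∈ W ∧ M.Adj u v

lemma HasNbr.of_agree {x y u : V}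
    (hxy : ∀ v s, M.Adj x v → M.Adj y s → v ≠ s → M.Adj v s) {W W' : Finset (V ⊕ Bool)}
    (hW : ∀ v, v ≠ x → inl v ∈ W → inl v ∈ W') (hy : HasNbr M y W') (hu : inl u ∉ W')
    (h : HasNbr M u W) : HasNbr M u W' := by
  obtain ⟨v, hvW, huv⟩ := h
  by_cases hvx : v = x
  · subst hvx
    obtain ⟨s, hsW, hys⟩ := hy
    exact ⟨s, hsW, hxy u s huv.symm hys fun hus => hu (hus ▸ hsW)⟩
  · exact ⟨v, hW v hvx hvW, huv⟩

@[simp] lemma addSquare₁_adj_inl_inl (hab : a ≠ b) {u v : V} :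
    (addSquare₁ M a b).Adj (inl u) (inl v) ↔ M.Adj u v ∨ u = a ∧ v = b ∨ u = b ∧ v = a := by
  simp only [addSquare₁, SimpleGraph.fromRel_adj, ne_eq, inl.injEq]
  grind [SimpleGraph.adj_comm, SimpleGraph.Adj.ne]

@[simp] lemma addSquare₁_adj_inl_inr {u : V} {t : Bool} :
    (addSquare₁ M a b).Adj (inl u) (inr t) ↔ u = cond t a b := by
  cases t <;> simp [addSquare₁]

@[simp] lemma addSquare₁_adj_inr_inr {s t : Bool} :
    (addSquare₁ M a b).Adj (inr s) (inr t) ↔ s ≠ t := by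
  simp [addSquare₁]; grind

@[simp] lemma addSquare₂_adj_inl_inl {u v : V} :
    (addSquare₂ M a b).Adj (inl u) (inl v) ↔ M.Adj u v := by
  simp only [addSquare₂, SimpleGraph.fromRel_adj, ne_eq, inl.injEq]
  grind [SimpleGraph.adj_comm, SimpleGraph.Adj.ne]

@[simp] lemma addSquare₂_adj_inl_inr {u : V} {t : Bool} :
    (addSquare₂ M a b).Adj (inl u) (inr t) ↔ u = a ∨ u = b := by
  simp [addSquare₂]

@[simp] lemma addSquare₂_adj_inr_inr {s t : Bool} :
    ¬ (addSquare₂ M a b).Adj (inr s) (inr t) := by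
  simp [addSquare₂]

lemma mem_extN [Fintype V] {G : SimpleGraph (V ⊕ Bool)} {W : Finset (V ⊕ Bool)}
    {v : V ⊕ Bool} : v ∈ extN G W ↔ v ∉ W ∧ ∃ w ∈ W, G.Adj v w := by
  simp [extN]

lemma inl_mem_extN_addSquare₁ [Fintype V] (hab : a ≠ b) {W : Finset (V ⊕ Bool)} {u : V} :
    inl u ∈ extN (addSquare₁ M a b) W ↔ inl u ∉ W ∧
      (HasNbr M u W ∨ u = a ∧ (inl b ∈ W ∨ inr true ∈ W) ∨
        u = b ∧ (inl a ∈ W ∨ inr false ∈ W)) := by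
  simp [mem_extN, HasNbr, Sum.exists, hab]
  grind

lemma inr_mem_extN_addSquare₁ [Fintype V] {W : Finset (V ⊕ Bool)} {t : Bool} :
    inr t ∈ extN (addSquare₁ M a b) W ↔ inr t ∉ W ∧
      (inl (cond t a b) ∈ W ∨ inr (!t) ∈ W) := by
  simp only [mem_extN, SimpleGraph.adj_comm _ (inr t)]
  cases t <;> simp [Sum.exists]

lemma inl_mem_extN_addSquare₂ [Fintype V] {W : Finset (V ⊕ Bool)} {u : V} :
    inl u ∈ extN (addSquare₂ M a b) W ↔ inl u ∉ W ∧
      (HasNbr M u W ∨ (u = a ∨ u = b) ∧ (inr false ∈ W ∨ inr true ∈ W)) := by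
  simp [mem_extN, HasNbr, Sum.exists, and_comm]

lemma inr_mem_extN_addSquare₂ [Fintype V] {W : Finset (V ⊕ Bool)} {t : Bool} :
    inr t ∈ extN (addSquare₂ M a b) W ↔ inr t ∉ W ∧ (inl a ∈ W ∨ inl b ∈ W) := by
  simp [mem_extN, SimpleGraph.adj_comm _ (inr t), Sum.exists, and_or_left, exists_or]

noncomputable def square (a b : V) : Finset (V ⊕ Bool) := {inl a, inl b, inr false, inr true}

lemma sdiff_square_congr {s s' : Finset (V ⊕ Bool)}
    (h : ∀ u, u ≠ a → u ≠ b → (inl u ∈ s ↔ inl u ∈ s')) : s \ square a b = s' \ square a b := by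
  ext (u | t)
  · by_cases hua : u = a
    · simp [square, hua]
    by_cases hub : u = b
    · simp [square, hub]
    simp [square, hua, hub, h u hua hub]
  · simp [square]

lemma extN_addSquare₁_sdiff_square [Fintype V] (hab : a ≠ b) (W : Finset (V ⊕ Bool)) :
    extN (addSquare₁ M a b) W \ square a b = extN (addSquare₂ M a b) W \ square a b :=
  sdiff_square_congr fun u hua hub => by
    simp [inl_mem_extN_addSquare₁ hab, inl_mem_extN_addSquare₂, hua, hub]

lemma card_inter_square (hab : a ≠ b) (s : Finset (V ⊕ Bool)) :
    (s ∩ square a b).card = (inl a ∈ s : Bool).toNat + (inl b ∈ s : Bool).toNat +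
      (inr false ∈ s : Bool).toNat + (inr true ∈ s : Bool).toNat := by
  rw [inter_comm, ← filter_mem_eq_inter, card_filter, square,
    sum_insert (by simp [hab]), sum_insert (by simp), sum_insert (by simp), sum_singleton]
  simp only [Bool.toNat, decide_eq_true_eq, cond_eq_ite]
  ring

/-- `α β γ δ` record whether `a b c d` lie in `W`, and `p q` whether `a b` have an `M`-neighbour
in `W`; the summands count `a, b, c, d` in the external neighbourhood of `W` in `M₁`
(for `squareCount₂`, in `M₂`). -/
def squareCount₁ (α β γ δ p q : Bool) : ℕ :=
  (!α && (p || β || δ)).toNat + (!β && (q || α || γ)).toNat + (!γ && (β || δ)).toNat +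
    (!δ && (α || γ)).toNat

def squareCount₂ (α β γ δ p q : Bool) : ℕ :=
  (!α && (p || γ || δ)).toNat + (!β && (q || γ || δ)).toNat + (!γ && (α || β)).toNat +
    (!δ && (α || β)).toNat

lemma card_extN_addSquare₁_inter_square [Fintype V] (hab : a ≠ b) (W : Finset (V ⊕ Bool)) :
    (extN (addSquare₁ M a b) W ∩ square a b).card =
      squareCount₁ (inl a ∈ W) (inl b ∈ W) (inr false ∈ W) (inr true ∈ W) (HasNbr M a W)
        (HasNbr M b W) := by
  rw [card_inter_square hab]
  simp [squareCount₁, inl_mem_extN_addSquare₁ hab, inr_mem_extN_addSquare₁, hab, hab.symm,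
    Bool.or_assoc]

lemma card_extN_addSquare₂_inter_square [Fintype V] (hab : a ≠ b) (W : Finset (V ⊕ Bool)) :
    (extN (addSquare₂ M a b) W ∩ square a b).card =
      squareCount₂ (inl a ∈ W) (inl b ∈ W) (inr false ∈ W) (inr true ∈ W) (HasNbr M a W)
        (HasNbr M b W) := by
  rw [card_inter_square hab]
  simp [squareCount₂, inl_mem_extN_addSquare₂, inr_mem_extN_addSquare₂, hab, hab.symm,
    Bool.or_assoc]

lemma squareCount₁_eq_squareCount₂_swap_ad : ∀ α β γ δ p q : Bool,
    α ≠ δ → β = false → γ = false → q = true →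
      squareCount₁ α β γ δ p q = squareCount₂ δ β γ α p q := by
  decide

lemma squareCount₁_eq_squareCount₂_swap_bc : ∀ α β γ δ p q : Bool,
    β ≠ γ → α = false → δ = false → p = true →
      squareCount₁ α β γ δ p q = squareCount₂ α γ β δ p q := by
  decide

lemma squareCount₁_eq_squareCount₂ : ∀ α β γ δ p q : Bool,
    (xor α δ && !β && !γ && q) = false → (xor β γ && !α && !δ && p) = false →
      squareCount₁ α β γ δ p q = squareCount₂ α β γ δ p q := by
  decide

noncomputable def exchange (x : V) (t : Bool) (W : Finset (V ⊕ Bool)) : Finset (V ⊕ Bool) :=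
  W.map (Equiv.swap (inl x) (inr t)).toEmbedding

@[simp] lemma mem_exchange {x : V} {t : Bool} {W : Finset (V ⊕ Bool)} {v : V ⊕ Bool} :
    v ∈ exchange x t W ↔ Equiv.swap (inl x) (inr t) v ∈ W := by
  simp [exchange, mem_map_equiv]

lemma inl_mem_exchange_self (x : V) (t : Bool) (W : Finset (V ⊕ Bool)) :
    inl x ∈ exchange x t W ↔ inr t ∈ W := by
  rw [mem_exchange, Equiv.swap_apply_left]

lemma inr_mem_exchange_self (x : V) (t : Bool) (W : Finset (V ⊕ Bool)) :
    inr t ∈ exchange x t W ↔ inl x ∈ W := by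
  rw [mem_exchange, Equiv.swap_apply_right]

lemma inl_mem_exchange_of_ne {x v : V} (hvx : v ≠ x) (t : Bool) (W : Finset (V ⊕ Bool)) :
    inl v ∈ exchange x t W ↔ inl v ∈ W := by
  rw [mem_exchange, Equiv.swap_apply_of_ne_of_ne (by simpa) (by simp)]

lemma inr_mem_exchange_of_ne {s t : Bool} (hst : s ≠ t) (x : V) (W : Finset (V ⊕ Bool)) :
    inr s ∈ exchange x t W ↔ inr s ∈ W := by
  rw [mem_exchange, Equiv.swap_apply_of_ne_of_ne (by simp) (by simpa)]

lemma exchange_involutive (x : V) (t : Bool) : Function.Involutive (exchange x t) := fun W => by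
  ext v; simp

lemma card_exchange (x : V) (t : Bool) (W : Finset (V ⊕ Bool)) :
    (exchange x t W).card = W.card :=
  card_map _

lemma hasNbr_exchange {z x : V} (hzx : ¬ M.Adj z x) (t : Bool) (W : Finset (V ⊕ Bool)) :
    HasNbr M z (exchange x t W) ↔ HasNbr M z W :=
  exists_congr fun v => and_congr_left fun hzv =>
    inl_mem_exchange_of_ne (by rintro rfl; exact hzx hzv) t W

lemma extN_addSquare₂_exchange_sdiff_square [Fintype V] {x y : V} (hx : x = a ∨ x = b)
    (hxy : ∀ v s, M.Adj x v → M.Adj y s → v ≠ s → M.Adj v s) (t : Bool)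
    {W : Finset (V ⊕ Bool)} (hy : HasNbr M y W) (hy' : HasNbr M y (exchange x t W)) :
    extN (addSquare₂ M a b) (exchange x t W) \ square a b =
      extN (addSquare₂ M a b) W \ square a b := by
  refine sdiff_square_congr fun u hua hub => ?_
  have hmem : ∀ v, v ≠ x → (inl v ∈ exchange x t W ↔ inl v ∈ W) :=
    fun v hvx => inl_mem_exchange_of_ne hvx t W
  have hux : u ≠ x := by rcases hx with rfl | rfl <;> assumption
  simp only [inl_mem_extN_addSquare₂, hua, hub, or_self, false_and, or_false, hmem u hux]
  exact and_congr_right fun hu =>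
    ⟨HasNbr.of_agree hxy (fun v hv => (hmem v hv).1) hy hu,
      HasNbr.of_agree hxy (fun v hv => (hmem v hv).2) hy' ((hmem u hux).not.2 hu)⟩

def Exchangeable (M : SimpleGraph V) (x y : V) (t : Bool) (W : Finset (V ⊕ Bool)) : Prop :=
  Xor (inl x ∈ W) (inr t ∈ W) ∧ inl y ∉ W ∧ inr (!t) ∉ W ∧ HasNbr M y W

lemma exchangeable_exchange {x y : V} (hxy : x ≠ y) (hyx : ¬ M.Adj y x) (t : Bool)
    (W : Finset (V ⊕ Bool)) :
    Exchangeable M x y t (exchange x t W) ↔ Exchangeable M x y t W := by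
  simp only [Exchangeable, inl_mem_exchange_self, inr_mem_exchange_self,
    inl_mem_exchange_of_ne hxy.symm, inr_mem_exchange_of_ne (Bool.not_ne_self t),
    hasNbr_exchange hyx, xor_comm (inr t ∈ W)]

noncomputable def squareSwap (M : SimpleGraph V) (a b : V) (W : Finset (V ⊕ Bool)) :
    Finset (V ⊕ Bool) :=
  if Exchangeable M a b true W then exchange a true W
  else if Exchangeable M b a false W then exchange b false W
  else W

lemma squareSwap_involutive (hab : a ≠ b) (hnadj : ¬ M.Adj a b) :
    Function.Involutive (squareSwap M a b) :=
  Function.Involutive.ite_ite (exchange_involutive a true) (exchange_involutive b false)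
    (exchangeable_exchange hab (fun h => hnadj h.symm) true)
    (exchangeable_exchange hab.symm hnadj false)
    fun _ had hbc => by simp_all [Exchangeable, Xor]

lemma card_squareSwap (W : Finset (V ⊕ Bool)) : (squareSwap M a b W).card = W.card := by
  unfold squareSwap
  split_ifs <;> simp [card_exchange]

lemma card_extN_exchange_ad [Fintype V] (hab : a ≠ b) (hnadj : ¬ M.Adj a b)
    (hjoin : ∀ u s, M.Adj a u → M.Adj b s → u ≠ s → M.Adj u s) {W : Finset (V ⊕ Bool)}
    (hW : Exchangeable M a b true W) :
    (extN (addSquare₂ M a b) (exchange a true W)).card = (extN (addSquare₁ M a b) W).card := by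
  have hba : ¬ M.Adj b a := fun h => hnadj h.symm
  obtain ⟨hxor, hb, hc, hnb⟩ := hW
  rw [← card_sdiff_add_card_inter _ (square a b), ← card_sdiff_add_card_inter (extN _ W),
    extN_addSquare₁_sdiff_square hab, card_extN_addSquare₁_inter_square hab,
    card_extN_addSquare₂_inter_square hab, extN_addSquare₂_exchange_sdiff_square (Or.inl rfl)
      hjoin true hnb ((hasNbr_exchange hba true W).2 hnb)]
  simp only [inl_mem_exchange_self, inr_mem_exchange_self, inl_mem_exchange_of_ne hab.symm,
    inr_mem_exchange_of_ne Bool.false_ne_true, hasNbr_exchange hba, hasNbr_exchange M.irrefl]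
  congr 1
  refine (squareCount₁_eq_squareCount₂_swap_ad _ _ _ _ _ _ ?_ ?_ ?_ ?_).symm <;>
    simp_all [xor_iff_not_iff]

lemma card_extN_exchange_bc [Fintype V] (hab : a ≠ b) (hnadj : ¬ M.Adj a b)
    (hjoin : ∀ u s, M.Adj a u → M.Adj b s → u ≠ s → M.Adj u s) {W : Finset (V ⊕ Bool)}
    (hW : Exchangeable M b a false W) :
    (extN (addSquare₂ M a b) (exchange b false W)).card = (extN (addSquare₁ M a b) W).card := by
  obtain ⟨hxor, ha, hd, hna⟩ := hW
  rw [← card_sdiff_add_card_inter _ (square a b), ← card_sdiff_add_card_inter (extN _ W),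
    extN_addSquare₁_sdiff_square hab, card_extN_addSquare₁_inter_square hab,
    card_extN_addSquare₂_inter_square hab, extN_addSquare₂_exchange_sdiff_square (Or.inr rfl)
      (fun v s hbv has hvs => (hjoin s v has hbv hvs.symm).symm) false hna
      ((hasNbr_exchange hnadj false W).2 hna)]
  simp only [inl_mem_exchange_self, inr_mem_exchange_self, inl_mem_exchange_of_ne hab,
    inr_mem_exchange_of_ne Bool.false_ne_true.symm, hasNbr_exchange hnadj,
    hasNbr_exchange M.irrefl]
  congr 1
  refine (squareCount₁_eq_squareCount₂_swap_bc _ _ _ _ _ _ ?_ ?_ ?_ ?_).symm <;>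
    simp_all [xor_iff_not_iff]

lemma card_extN_of_not_exchangeable [Fintype V] (hab : a ≠ b) {W : Finset (V ⊕ Bool)}
    (had : ¬ Exchangeable M a b true W) (hbc : ¬ Exchangeable M b a false W) :
    (extN (addSquare₂ M a b) W).card = (extN (addSquare₁ M a b) W).card := by
  rw [← card_sdiff_add_card_inter _ (square a b), ← card_sdiff_add_card_inter (extN _ W),
    extN_addSquare₁_sdiff_square hab, card_extN_addSquare₁_inter_square hab,
    card_extN_addSquare₂_inter_square hab]
  congr 1
  refine (squareCount₁_eq_squareCount₂ _ _ _ _ _ _ ?_ ?_).symm <;>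
    simp_all [Exchangeable, xor_iff_not_iff]

lemma card_extN_squareSwap [Fintype V] (hab : a ≠ b) (hnadj : ¬ M.Adj a b)
    (hjoin : ∀ u s, M.Adj a u → M.Adj b s → u ≠ s → M.Adj u s) (W : Finset (V ⊕ Bool)) :
    (extN (addSquare₂ M a b) (squareSwap M a b W)).card = (extN (addSquare₁ M a b) W).card := by
  unfold squareSwap
  split_ifs with had hbc
  · exact card_extN_exchange_ad hab hnadj hjoin had
  · exact card_extN_exchange_bc hab hnadj hjoin hbc
  · exact card_extN_of_not_exchangeable hab had hbc

end AddSquare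

theorem J_add_square_two_ways {V : Type} [Fintype V] (M : SimpleGraph V) (a b : V)
    (hab : a ≠ b) (hnadj : ¬ M.Adj a b)
    (hcommon : ∀ w, M.Adj a w → M.Adj b w → ∀ z, z ≠ w → M.Adj w z)
    (hside : (∀ w z, M.Adj a w → ¬ M.Adj b w → M.Adj b z → M.Adj w z) ∨
             (∀ w z, M.Adj b w → ¬ M.Adj a w → M.Adj a z → M.Adj w z))
    (x y : ℝ) :
    JP (addSquare₁ M a b) x y = JP (addSquare₂ M a b) x y := by
  refine Fintype.sum_bijective _ (AddSquare.squareSwap_involutive hab hnadj).bijective _ _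
    fun W => ?_
  rw [AddSquare.card_squareSwap,
    AddSquare.card_extN_squareSwap hab hnadj (AddSquare.adj_of_adj_of_adj hcommon hside)]
end
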